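/- arXiv:1710.05424 — 3 statements merged into one kernel-verified Lean document; each statement's English description precedes it below -/
import Mathlib

section
/- Let (A₊, A₋) be a dual pair with λ in the field of regularity of A₊ and λ̄ in the field of regularity of A₋, and let be a proper extension of the dual pair with λ ∈ ρ(Â). Then D(A₋*) = D(closure(A₊)) ∔ (Â - λ)⁻¹ ker(A₊* - λ̄) ∔ ker(A₋* - λ), where ∔ denotes a direct (not necessarily orthogonal) sum of subspaces. -/
open scoped ComplexInnerProductSpace
open Filter Topology

namespace Statement8Aux

variable {H : Type*} [NormedAddCommGroup H] [InnerProductSpace ℂ H] [CompleteSpace H]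

lemma pmap_le {S T : H →ₗ.[ℂ] H} (h : S ≤ T) {a : H} (ha : a ∈ S.domain) :
    T ⟨a, h.1 ha⟩ = S ⟨a, ha⟩ :=
  (h.2 (x := ⟨a, ha⟩) (y := ⟨a, h.1 ha⟩) rfl).symm

lemma pmap_sub (T : H →ₗ.[ℂ] H) {a b : H} (ha : a ∈ T.domain) (hb : b ∈ T.domain) :
    T ⟨a - b, sub_mem ha hb⟩ = T ⟨a, ha⟩ - T ⟨b, hb⟩ :=
  T.toFun.map_sub ⟨a, ha⟩ ⟨b, hb⟩

lemma closure_approx (A : H →ₗ.[ℂ] H) (hA : A.IsClosable) (f : A.closure.domain) :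
    ∃ x : ℕ → A.domain,
      Tendsto (fun n => ((x n : H))) atTop (𝓝 (f : H)) ∧
      Tendsto (fun n => A (x n)) atTop (𝓝 (A.closure f)) := by
  have hg : ((f : H), A.closure f) ∈ closure (A.graph : Set (H × H)) := by
    rw [← Submodule.topologicalClosure_coe, hA.graph_closure_eq_closure_graph]
    exact A.closure.mem_graph f
  rw [mem_closure_iff_seq_limit] at hg
  obtain ⟨y, hy, hyt⟩ := hg
  choose x hx1 hx2 using fun n => (A.mem_graph_iff.mp (hy n))
  refine ⟨x, ?_, ?_⟩
  · have h1 := (continuous_fst.tendsto _).comp hyt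
    convert h1 using 2 with n
    exact hx1 n
  · have h2 := (continuous_snd.tendsto _).comp hyt
    convert h2 using 2 with n
    exact hx2 n

end Statement8Aux
set_option maxHeartbeats 1000000 in
/-- Let `(A₊, A₋)` be a dual pair with `λ` in the field of regularity of `A₊` and
`λ̄` in that of `A₋`, and let `Â` be a proper extension of the dual pair with `λ ∈ ρ(Â)`
(its resolvent is the bounded operator `R = (Â − λ)⁻¹`). Then
`D(A₋*) = D(closure A₊) ∔ (Â − λ)⁻¹ ker(A₊* − λ̄) ∔ ker(A₋* − λ)` (a direct sum). -/
theorem statement8 {H : Type*} [NormedAddCommGroup H] [InnerProductSpace ℂ H] [CompleteSpace H]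
    (Aplus Aminus : H →ₗ.[ℂ] H)
    (hdp : Dense (Aplus.domain : Set H)) (hdm : Dense (Aminus.domain : Set H))
    (hdual : Aplus ≤ Aminus.adjoint) (hdual' : Aminus ≤ Aplus.adjoint)
    (hclp : Aplus.IsClosable)
    (lam : ℂ)
    (hregp : ∃ c : ℝ, 0 < c ∧ ∀ f : Aplus.domain, c * ‖(f : H)‖ ≤ ‖Aplus f - lam • (f : H)‖)
    (hregm : ∃ c : ℝ, 0 < c ∧
      ∀ f : Aminus.domain, c * ‖(f : H)‖ ≤ ‖Aminus f - (starRingEnd ℂ) lam • (f : H)‖)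
    (Ahat : H →ₗ.[ℂ] H)
    (hproper₁ : Aplus.closure ≤ Ahat) (hproper₂ : Ahat ≤ Aminus.adjoint)
    -- λ ∈ ρ(Â): the resolvent R = (Â − λ)⁻¹ is an everywhere-defined bounded operator
    (R : H →L[ℂ] H)
    (hR1 : ∀ x : H, R x ∈ Ahat.domain)
    (hR2 : ∀ x : H, Ahat ⟨R x, hR1 x⟩ - lam • R x = x)
    (hR3 : ∀ w : Ahat.domain, R (Ahat w - lam • (w : H)) = (w : H)) :
    -- existence of the decomposition
    (∀ u : H, u ∈ Aminus.adjoint.domain →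
      ∃ f k h : H, f ∈ Aplus.closure.domain ∧
        (∃ hk : k ∈ Aplus.adjoint.domain,
          Aplus.adjoint ⟨k, hk⟩ = (starRingEnd ℂ) lam • k) ∧
        (∃ hh : h ∈ Aminus.adjoint.domain, Aminus.adjoint ⟨h, hh⟩ = lam • h) ∧
        u = f + R k + h) ∧
    -- uniqueness (directness of the sum)
    (∀ f f' k k' h h' : H,
      f ∈ Aplus.closure.domain → f' ∈ Aplus.closure.domain →
      (∃ hk : k ∈ Aplus.adjoint.domain,
        Aplus.adjoint ⟨k, hk⟩ = (starRingEnd ℂ) lam • k) →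
      (∃ hk' : k' ∈ Aplus.adjoint.domain,
        Aplus.adjoint ⟨k', hk'⟩ = (starRingEnd ℂ) lam • k') →
      (∃ hh : h ∈ Aminus.adjoint.domain, Aminus.adjoint ⟨h, hh⟩ = lam • h) →
      (∃ hh' : h' ∈ Aminus.adjoint.domain, Aminus.adjoint ⟨h', hh'⟩ = lam • h') →
      f + R k + h = f' + R k' + h' → f = f' ∧ k = k' ∧ h = h') := by
  classical
  obtain ⟨c, hc, hreg⟩ := hregp
  set B := Aplus.closure with hBdef
  set T := Aminus.adjoint with hTdef
  have hle : B ≤ T := hproper₁.trans hproper₂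
  -- regularity bound extends to the closure
  have hBreg : ∀ d : B.domain, c * ‖(d : H)‖ ≤ ‖B d - lam • (d : H)‖ := by
    intro d
    obtain ⟨x, hx1, hx2⟩ := Statement8Aux.closure_approx Aplus hclp d
    exact le_of_tendsto_of_tendsto' (hx1.norm.const_mul c)
      ((hx2.sub (hx1.const_smul lam)).norm) (fun n => hreg (x n))
  -- elements of ker(A₊† − λ̄) are orthogonal to the range of (B − λ)
  have hperp : ∀ k : H,
      (∃ hk : k ∈ Aplus.adjoint.domain,
        Aplus.adjoint ⟨k, hk⟩ = (starRingEnd ℂ) lam • k) →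
      ∀ d : B.domain, ⟪k, B d - lam • (d : H)⟫ = 0 := by
    rintro k ⟨hk, hk2⟩ d
    obtain ⟨x, hx1, hx2⟩ := Statement8Aux.closure_approx Aplus hclp d
    have h0 : ∀ n, ⟪k, Aplus (x n) - lam • ((x n) : H)⟫ = (0 : ℂ) := by
      intro n
      have hfa := (LinearPMap.adjoint_isFormalAdjoint hdp) ⟨k, hk⟩ (x n)
      rw [hk2] at hfa
      rw [inner_sub_right, ← hfa, inner_smul_left, inner_smul_right]
      simp [Complex.conj_conj]
    have hlim : Tendsto (fun n => ⟪k, Aplus (x n) - lam • ((x n) : H)⟫) atTop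
        (𝓝 ⟪k, B d - lam • (d : H)⟫) :=
      Filter.Tendsto.inner tendsto_const_nhds (hx2.sub (hx1.const_smul lam))
    have heq : (fun n => ⟪k, Aplus (x n) - lam • ((x n) : H)⟫) = fun _ => (0 : ℂ) :=
      funext h0
    rw [heq] at hlim
    exact tendsto_nhds_unique hlim tendsto_const_nhds
  -- the range of (B − λ)
  set L : B.domain →ₗ[ℂ] H := B.toFun - lam • B.domain.subtype with hLdef
  have hL : ∀ d : B.domain, L d = B d - lam • (d : H) := fun d => rfl
  set K : Submodule ℂ H := LinearMap.range L with hKdef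
  have hKc : IsClosed (K : Set H) := by
    apply IsSeqClosed.isClosed
    intro gs g hgs hgt
    choose d hd using fun n => LinearMap.mem_range.mp (hgs n)
    have hcau : CauchySeq (fun n => ((d n : H))) := by
      rw [Metric.cauchySeq_iff]
      intro ε hε
      obtain ⟨N, hN⟩ := (Metric.cauchySeq_iff.mp hgt.cauchySeq) (c * ε) (mul_pos hc hε)
      refine ⟨N, fun m hm n hn => ?_⟩
      have h1 := hBreg (d m - d n)
      have h2 : B (d m - d n) - lam • ((d m - d n : B.domain) : H) = gs m - gs n := by
        rw [← hL, map_sub, hd, hd]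
      rw [h2] at h1
      have h3 : ((d m - d n : B.domain) : H) = (d m : H) - (d n : H) := rfl
      rw [h3] at h1
      have h4 : ‖gs m - gs n‖ < c * ε := by
        have := hN m hm n hn
        rwa [dist_eq_norm] at this
      rw [dist_eq_norm]
      have := lt_of_le_of_lt h1 h4
      exact lt_of_mul_lt_mul_left (by linarith) hc.le
    obtain ⟨f, hf⟩ := cauchySeq_tendsto_of_complete hcau
    have hgraph : ((f : H), g + lam • f) ∈ B.graph := by
      have hcl : IsClosed (B.graph : Set (H × H)) := hclp.closure_isClosed
      apply hcl.mem_of_tendsto (Filter.Tendsto.prodMk_nhds hf (hgt.add (hf.const_smul lam)))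
      filter_upwards with n
      have hval : B (d n) = gs n + lam • ((d n : H)) := by
        have h5 : B (d n) - lam • ((d n : H)) = gs n := by rw [← hL]; exact hd n
        exact eq_add_of_sub_eq h5
      have := B.mem_graph (d n)
      rwa [hval] at this
    rw [LinearPMap.mem_graph_iff] at hgraph
    obtain ⟨w, hw1, hw2⟩ := hgraph
    refine LinearMap.mem_range.mpr ⟨w, ?_⟩
    rw [hL, hw2, hw1]; exact add_sub_cancel_right _ _
  haveI : CompleteSpace K := hKc.completeSpace_coe
  constructor
  · -- existence
    intro u hu
    obtain ⟨y, hyK, z, hz, hyz⟩ := K.exists_add_mem_mem_orthogonal (T ⟨u, hu⟩ - lam • u)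
    obtain ⟨df, hdf⟩ := LinearMap.mem_range.mp hyK
    -- z is in ker(A₊† − λ̄)
    have hz' : ∀ x : Aplus.domain, ⟪(starRingEnd ℂ) lam • z, (x : H)⟫ = ⟪z, Aplus x⟫ := by
      intro x
      have hxB : (x : H) ∈ B.domain := Aplus.le_closure.1 x.2
      have hzero : ⟪z, B ⟨(x : H), hxB⟩ - lam • (x : H)⟫ = 0 := by
        have hmem : B ⟨(x : H), hxB⟩ - lam • (x : H) ∈ K :=
          LinearMap.mem_range.mpr ⟨⟨(x : H), hxB⟩, rfl⟩
        exact (Submodule.mem_orthogonal' K z).mp hz _ hmem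
      have hBx : B ⟨(x : H), hxB⟩ = Aplus x := by
        have := Statement8Aux.pmap_le (Aplus.le_closure) x.2
        convert this using 2
      rw [hBx, inner_sub_right, sub_eq_zero] at hzero
      rw [hzero, inner_smul_left, inner_smul_right]
      simp [Complex.conj_conj]
    have hzmem : z ∈ Aplus.adjoint.domain :=
      LinearPMap.mem_adjoint_domain_of_exists _ ⟨_, hz'⟩
    have hzval : Aplus.adjoint ⟨z, hzmem⟩ = (starRingEnd ℂ) lam • z :=
      LinearPMap.adjoint_apply_eq hdp _ hz'
    -- memberships in T.domain
    have hfT : (df : H) ∈ T.domain := hle.1 df.2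
    have hRzT : R z ∈ T.domain := hproper₂.1 (hR1 z)
    have hhT : u - (df : H) - R z ∈ T.domain := sub_mem (sub_mem hu hfT) hRzT
    -- values
    have hTf : T ⟨(df : H), hfT⟩ = B df := by
      have := Statement8Aux.pmap_le hle df.2
      convert this using 2
    have hTRz : T ⟨R z, hproper₂.1 (hR1 z)⟩ = z + lam • R z := by
      have h6 := Statement8Aux.pmap_le hproper₂ (hR1 z)
      rw [h6]
      exact sub_eq_iff_eq_add.mp (hR2 z)
    have hTh : T ⟨u - (df : H) - R z, hhT⟩ = lam • (u - (df : H) - R z) := by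
      rw [Statement8Aux.pmap_sub T (sub_mem hu hfT) hRzT,
        Statement8Aux.pmap_sub T hu hfT, hTf, hTRz]
      have h7 : T ⟨u, hu⟩ = (B df - lam • (df : H)) + z + lam • u := by
        have h := hyz
        rw [← hdf, hL df] at h
        exact eq_add_of_sub_eq h
      rw [h7]
      simp only [smul_sub]
      abel
    refine ⟨(df : H), z, u - (df : H) - R z, df.2, ⟨hzmem, hzval⟩, ⟨hhT, hTh⟩, by abel⟩
  · -- uniqueness
    rintro f f' k k' h h' hf hf' ⟨hk, hkv⟩ ⟨hk', hkv'⟩ ⟨hh, hhv⟩ ⟨hh', hhv'⟩ he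
    have hdfB : f - f' ∈ B.domain := sub_mem hf hf'
    have hdkA : k - k' ∈ Aplus.adjoint.domain := sub_mem hk hk'
    have hdkv : Aplus.adjoint ⟨k - k', hdkA⟩ = (starRingEnd ℂ) lam • (k - k') := by
      rw [Statement8Aux.pmap_sub Aplus.adjoint hk hk', hkv, hkv', smul_sub]
    have hdhT : h - h' ∈ T.domain := sub_mem hh hh'
    have hdhv : T ⟨h - h', hdhT⟩ = lam • (h - h') := by
      rw [Statement8Aux.pmap_sub T hh hh', hhv, hhv', smul_sub]
    -- the sum of the differences is zero
    have hsum : (f - f') + R (k - k') + (h - h') = 0 := by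
      rw [map_sub]
      have := sub_eq_zero_of_eq he
      calc f - f' + (R k - R k') + (h - h')
          = (f + R k + h) - (f' + R k' + h') := by abel
        _ = 0 := this
    -- memberships in T.domain
    have hdfT : f - f' ∈ T.domain := hle.1 hdfB
    have hRdkT : R (k - k') ∈ T.domain := hproper₂.1 (hR1 (k - k'))
    have hTdf : T ⟨f - f', hdfT⟩ = B ⟨f - f', hdfB⟩ := by
      have := Statement8Aux.pmap_le hle hdfB
      convert this using 2
    have hTRdk : T ⟨R (k - k'), hRdkT⟩ = (k - k') + lam • R (k - k') := by
      have h6 := Statement8Aux.pmap_le hproper₂ (hR1 (k - k'))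
      rw [h6]
      exact sub_eq_iff_eq_add.mp (hR2 (k - k'))
    -- apply T to the zero sum
    have hTsum : B ⟨f - f', hdfB⟩ + ((k - k') + lam • R (k - k')) + lam • (h - h') = 0 := by
      have hmem0 : (f - f') + R (k - k') + (h - h') ∈ T.domain :=
        add_mem (add_mem hdfT hRdkT) hdhT
      have hT0 : T ⟨(f - f') + R (k - k') + (h - h'), hmem0⟩ = 0 := by
        have hz0 : T ⟨0, zero_mem _⟩ = 0 := T.toFun.map_zero
        rw [← hz0]
        congr 1
        exact Subtype.ext hsum
      have hsplit : T ⟨(f - f') + R (k - k') + (h - h'), hmem0⟩ =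
          T ⟨f - f', hdfT⟩ + T ⟨R (k - k'), hRdkT⟩ + T ⟨h - h', hdhT⟩ := by
        have e1 : (⟨(f - f') + R (k - k') + (h - h'), hmem0⟩ : T.domain) =
            ⟨f - f', hdfT⟩ + ⟨R (k - k'), hRdkT⟩ + ⟨h - h', hdhT⟩ := rfl
        rw [e1, T.map_add, T.map_add]
      rw [hsplit, hTdf, hTRdk, hdhv] at hT0
      exact hT0
    -- subtract lam • (zero sum): (B − λ)(f − f') + (k − k') = 0
    have hkey : (B ⟨f - f', hdfB⟩ - lam • (f - f')) + (k - k') = 0 := by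
      have h8 : lam • ((f - f') + R (k - k') + (h - h')) = 0 := by rw [hsum, smul_zero]
      rw [smul_add, smul_add] at h8
      calc (B ⟨f - f', hdfB⟩ - lam • (f - f')) + (k - k')
          = (B ⟨f - f', hdfB⟩ + ((k - k') + lam • R (k - k')) + lam • (h - h'))
            - (lam • (f - f') + lam • R (k - k') + lam • (h - h')) := by abel
        _ = 0 - 0 := by rw [hTsum, h8]
        _ = 0 := by abel
    -- inner product with (k − k') kills the first term
    have hperp' : ⟪k - k', B ⟨f - f', hdfB⟩ - lam • (f - f')⟫ = 0 := by
      have := hperp (k - k') ⟨hdkA, hdkv⟩ ⟨f - f', hdfB⟩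
      exact this
    have hkzero : k - k' = 0 := by
      have h9 : B ⟨f - f', hdfB⟩ - lam • (f - f') = -(k - k') := by
        rw [← eq_neg_of_add_eq_zero_left hkey]
      rw [h9, inner_neg_right, neg_eq_zero, inner_self_eq_zero] at hperp'
      exact hperp'
    have hkk : k = k' := sub_eq_zero.mp hkzero
    have hfzero : f - f' = 0 := by
      have h10 : B ⟨f - f', hdfB⟩ - lam • (f - f') = 0 := by
        rw [hkzero, add_zero] at hkey
        exact hkey
      have h11 := hBreg ⟨f - f', hdfB⟩
      rw [h10] at h11
      simp only [norm_zero] at h11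
      have : ‖f - f'‖ ≤ 0 := by
        by_contra hcon
        push_neg at hcon
        nlinarith
      simpa [norm_le_zero_iff, sub_eq_zero] using this
    have hff : f = f' := sub_eq_zero.mp hfzero
    have hhh : h = h' := by
      have := hsum
      rw [hfzero, hkzero, map_zero, zero_add, zero_add] at this
      exact sub_eq_zero.mp this
    exact ⟨hff, hkk, hhh⟩
end

section
/- Let A± = ±iS + V with S, V symmetric, D(S)=D(V), V ≥ ε > 0, A± sectorial, and let A₊,F be the Friedrichs extension of A₊ (which satisfies 0 ∈ ρ(A₊,F) and is a proper extension of (A₊, A₋)). Then D(A₋*) = D(closure(A₊)) ∔ A₊,F⁻¹ ker(A₊*) ∔ ker(A₋*), a direct sum decomposition. -/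
/-!
Let `T̄ ⊆ A_F ⊆ B` with `A_F` boundedly invertible (here `T = A₊`, `B = A₋*`). Since `A_F⁻¹`
is continuous and inverts `T`, the graph of `T̄` contains `(A_F⁻¹ g, g)` for every `g` in the
closure of `ran T` (`T` is closable because `A_F`, whose graph is the flipped graph of a
bounded map, is closed), so `ran T̄ = cl(ran T)`, whose orthogonal complement is `ker T*`.
Given `u ∈ D(B)`, split `B u = T̄ f + k` accordingly; then `u - A_F⁻¹ (B u) ∈ ker B` and
`u = f + A_F⁻¹ k + (u - A_F⁻¹ (B u))`. Conversely, applying `B` to `f + A_F⁻¹ k + h = 0` gives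
`T̄ f = -k ∈ ran T̄ ∩ (ran T̄)ᗮ = 0`, hence `k = 0` and `f = A_F⁻¹ (T̄ f) = 0`.
-/

open scoped ComplexInnerProductSpace

namespace LinearPMap

section Kernel

variable {R E F : Type*} [Ring R] [AddCommGroup E] [Module R E] [AddCommGroup F] [Module R F]

def ker (A : E →ₗ.[R] F) : Submodule R E :=
  (LinearMap.ker A.toFun).map A.domain.subtype

theorem mem_ker {A : E →ₗ.[R] F} {x : E} :
    x ∈ A.ker ↔ ∃ hx : x ∈ A.domain, A ⟨x, hx⟩ = 0 := by
  simp [ker]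

end Kernel

section Closure

variable {R E F : Type*} [CommRing R]
  [AddCommGroup E] [Module R E] [TopologicalSpace E]
  [AddCommGroup F] [Module R F] [TopologicalSpace F]
  {A : E →ₗ.[R] F}

theorem isClosed_of_inverse [T2Space E] (B : F →L[R] E) (hB : ∀ y, B y ∈ A.domain)
    (hAB : ∀ y, A ⟨B y, hB y⟩ = y) (hBA : ∀ x : A.domain, B (A x) = x) : A.IsClosed := by
  have hgraph : (A.graph : Set (E × F)) = {p | p.1 = B p.2} := by
    ext ⟨x, y⟩
    simp only [SetLike.mem_coe, mem_graph_iff, Set.mem_ofPred_eq]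
    constructor
    · rintro ⟨x', rfl, rfl⟩
      exact (hBA x').symm
    · rintro rfl
      exact ⟨⟨B y, hB y⟩, rfl, hAB y⟩
  rw [LinearPMap.IsClosed, hgraph]
  exact isClosed_eq continuous_fst (B.continuous.comp continuous_snd)

theorem inverse_apply_of_le {AF : E →ₗ.[R] F} {B : F →L[R] E}
    (hBAF : ∀ x : AF.domain, B (AF x) = x) (hle : A ≤ AF) (x : A.domain) : B (A x) = x :=
  (congrArg B (hle.2 rfl)).trans (hBAF ⟨x, hle.1 x.2⟩)

theorem apply_inverse_of_le {A' : E →ₗ.[R] F} {B : F →L[R] E} (hB : ∀ y, B y ∈ A.domain)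
    (hAB : ∀ y, A ⟨B y, hB y⟩ = y) (hle : A ≤ A') (y : F) : A' ⟨B y, hle.1 (hB y)⟩ = y :=
  (hle.2 rfl).symm.trans (hAB y)

variable [TopologicalSpace R] [IsTopologicalAddGroup E] [ContinuousSMul R E]
  [IsTopologicalAddGroup F] [ContinuousSMul R F]

theorem IsClosable.closure_apply_mem_closure_range (hA : A.IsClosable) (x : A.closure.domain) :
    A.closure x ∈ (LinearMap.range A.toFun).topologicalClosure := by
  have hx : ((x : E), A.closure x) ∈ _root_.closure (A.graph : Set (E × F)) := by
    rw [← Submodule.topologicalClosure_coe, hA.graph_closure_eq_closure_graph]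
    exact A.closure.mem_graph x
  rw [← SetLike.mem_coe, Submodule.topologicalClosure_coe]
  refine _root_.closure_mono ?_ (image_closure_subset_closure_image continuous_snd ⟨_, hx, rfl⟩)
  rintro _ ⟨p, hp, rfl⟩
  obtain ⟨y, -, hy⟩ := A.mem_graph_iff.mp hp
  exact ⟨y, hy⟩

theorem IsClosable.mem_graph_closure_of_leftInverse (hA : A.IsClosable) (B : F →L[R] E)
    (hBA : ∀ x : A.domain, B (A x) = x) {y : F}
    (hy : y ∈ (LinearMap.range A.toFun).topologicalClosure) : (B y, y) ∈ A.closure.graph := by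
  rw [← hA.graph_closure_eq_closure_graph, ← SetLike.mem_coe, Submodule.topologicalClosure_coe]
  rw [← SetLike.mem_coe, Submodule.topologicalClosure_coe] at hy
  have hcont : Continuous fun z : F => (B z, z) := by fun_prop
  refine _root_.closure_mono ?_ (image_closure_subset_closure_image hcont ⟨y, hy, rfl⟩)
  rintro _ ⟨_, ⟨x, rfl⟩, rfl⟩
  simp [hBA]

end Closure

section Adjoint

open scoped InnerProductSpace

variable {𝕜 E F : Type*} [RCLike 𝕜] [NormedAddCommGroup E] [InnerProductSpace 𝕜 E]
  [NormedAddCommGroup F] [InnerProductSpace 𝕜 F] [CompleteSpace E] {T : E →ₗ.[𝕜] F}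

theorem ker_adjoint_eq_orthogonal_range (hT : Dense (T.domain : Set E)) :
    T†.ker = (LinearMap.range T.toFun)ᗮ := by
  ext y
  rw [mem_ker, Submodule.mem_orthogonal']
  constructor
  · rintro ⟨hy, hy0⟩ _ ⟨x, rfl⟩
    have := adjoint_isFormalAdjoint hT ⟨y, hy⟩ x
    rwa [hy0, inner_zero_left, eq_comm] at this
  · intro hy
    have hy' : ∀ x : T.domain, ⟪(0 : E), (x : E)⟫_𝕜 = ⟪y, T x⟫_𝕜 := fun x => by
      rw [inner_zero_left]; exact (hy _ ⟨x, rfl⟩).symm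
    exact ⟨mem_adjoint_domain_of_exists y ⟨0, hy'⟩, adjoint_apply_eq hT _ hy'⟩

end Adjoint

section Decomposition

variable {𝕜 E F : Type*} [RCLike 𝕜] [NormedAddCommGroup E] [InnerProductSpace 𝕜 E]
  [NormedAddCommGroup F] [InnerProductSpace 𝕜 F] [CompleteSpace E]
  {T AF B : E →ₗ.[𝕜] F} {R : F →L[𝕜] E}

theorem exists_eq_add_add_of_mem_domain [CompleteSpace F] (hT : Dense (T.domain : Set E))
    (hTAF : T.closure ≤ AF) (hAFB : AF ≤ B) (hR : ∀ y, R y ∈ AF.domain)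
    (hAFR : ∀ y, AF ⟨R y, hR y⟩ = y) (hRAF : ∀ x : AF.domain, R (AF x) = x)
    {u : E} (hu : u ∈ B.domain) :
    ∃ f ∈ T.closure.domain, ∃ k ∈ T†.ker, ∃ h ∈ B.ker, u = f + R k + h := by
  have hTc : T.IsClosable :=
    (isClosed_of_inverse R hR hAFR hRAF).isClosable.leIsClosable (T.le_closure.trans hTAF)
  set K := (LinearMap.range T.toFun).topologicalClosure
  have : CompleteSpace K := (Submodule.isClosed_topologicalClosure _).completeSpace_coe
  set w := B ⟨u, hu⟩
  obtain ⟨g, hg, k, hk, hw⟩ := K.exists_add_mem_mem_orthogonal w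
  obtain ⟨⟨f, hf⟩, (rfl : f = R g), -⟩ := T.closure.mem_graph_iff.mp <|
    hTc.mem_graph_closure_of_leftInverse R (inverse_apply_of_le hRAF (T.le_closure.trans hTAF)) hg
  have hRw : R w ∈ B.domain := hAFB.1 (hR w)
  refine ⟨R g, hf, k, ?_, u - R w, mem_ker.mpr ⟨sub_mem hu hRw, ?_⟩, ?_⟩
  · rwa [ker_adjoint_eq_orthogonal_range hT, ← Submodule.orthogonal_closure]
  · rw [show (⟨u - R w, _⟩ : B.domain) = ⟨u, hu⟩ - ⟨R w, hRw⟩ from rfl, B.map_sub,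
      apply_inverse_of_le hR hAFR hAFB, sub_self]
  · rw [← _root_.map_add R, ← hw]
    abel

theorem eq_zero_of_add_add_eq_zero (hT : Dense (T.domain : Set E))
    (hTAF : T.closure ≤ AF) (hAFB : AF ≤ B) (hR : ∀ y, R y ∈ AF.domain)
    (hAFR : ∀ y, AF ⟨R y, hR y⟩ = y) (hRAF : ∀ x : AF.domain, R (AF x) = x)
    {f h : E} {k : F} (hf : f ∈ T.closure.domain) (hk : k ∈ T†.ker) (hh : h ∈ B.ker)
    (hsum : f + R k + h = 0) : f = 0 ∧ k = 0 ∧ h = 0 := by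
  have hTc : T.IsClosable :=
    (isClosed_of_inverse R hR hAFR hRAF).isClosable.leIsClosable (T.le_closure.trans hTAF)
  obtain ⟨hhB, hBh⟩ := mem_ker.mp hh
  have hfB : f ∈ B.domain := hAFB.1 (hTAF.1 hf)
  have hBf : B ⟨f, hfB⟩ = T.closure ⟨f, hf⟩ := ((hTAF.trans hAFB).2 rfl).symm
  have hTf : T.closure ⟨f, hf⟩ + k = 0 := by
    have := congrArg B
      (show (⟨f, hfB⟩ + ⟨R k, hAFB.1 (hR k)⟩ + ⟨h, hhB⟩ : B.domain) = 0 from Subtype.ext hsum)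
    rwa [B.map_add, B.map_add, hBf, apply_inverse_of_le hR hAFR hAFB, hBh, add_zero,
      B.map_zero] at this
  have hTf0 : T.closure ⟨f, hf⟩ = 0 := by
    set K := (LinearMap.range T.toFun).topologicalClosure
    have hkK : k ∈ Kᗮ := by
      rwa [Submodule.orthogonal_closure, ← ker_adjoint_eq_orthogonal_range hT]
    refine Submodule.disjoint_def.mp K.orthogonal_disjoint _
      (hTc.closure_apply_mem_closure_range _) ?_
    rw [eq_neg_of_add_eq_zero_left hTf]
    exact neg_mem hkK
  have hk0 : k = 0 := by rwa [hTf0, zero_add] at hTf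
  have hf0 : f = 0 := by
    simpa [hTf0] using (inverse_apply_of_le hRAF hTAF ⟨f, hf⟩).symm
  refine ⟨hf0, hk0, ?_⟩
  rwa [hf0, hk0, _root_.map_zero, add_zero, zero_add] at hsum

end Decomposition

end LinearPMap

theorem statement9_general {H : Type*} [NormedAddCommGroup H] [InnerProductSpace ℂ H] [CompleteSpace H]
    (Dom : Submodule ℂ H) (hdense : Dense (Dom : Set H))
    (S V : Dom →ₗ[ℂ] H)
    (Aplus Aminus : H →ₗ.[ℂ] H)
    (hAp : Aplus = ⟨Dom, Complex.I • S + V⟩)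
    -- the Friedrichs extension A₊,F, a proper extension of the dual pair with 0 ∈ ρ(A₊,F)
    (AFp : H →ₗ.[ℂ] H)
    (hproper₁ : Aplus.closure ≤ AFp) (hproper₂ : AFp ≤ Aminus.adjoint)
    (AFinv : H →L[ℂ] H)
    (hinv1 : ∀ x : H, AFinv x ∈ AFp.domain)
    (hinv2 : ∀ x : H, AFp ⟨AFinv x, hinv1 x⟩ = x)
    (hinv3 : ∀ w : AFp.domain, AFinv (AFp w) = (w : H)) :
    -- existence of the decomposition
    (∀ u : H, u ∈ Aminus.adjoint.domain →
      ∃ f k h : H, f ∈ Aplus.closure.domain ∧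
        (∃ hk : k ∈ Aplus.adjoint.domain, Aplus.adjoint ⟨k, hk⟩ = 0) ∧
        (∃ hh : h ∈ Aminus.adjoint.domain, Aminus.adjoint ⟨h, hh⟩ = 0) ∧
        u = f + AFinv k + h) ∧
    -- uniqueness (directness of the sum)
    (∀ f f' k k' h h' : H,
      f ∈ Aplus.closure.domain → f' ∈ Aplus.closure.domain →
      (∃ hk : k ∈ Aplus.adjoint.domain, Aplus.adjoint ⟨k, hk⟩ = 0) →
      (∃ hk' : k' ∈ Aplus.adjoint.domain, Aplus.adjoint ⟨k', hk'⟩ = 0) →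
      (∃ hh : h ∈ Aminus.adjoint.domain, Aminus.adjoint ⟨h, hh⟩ = 0) →
      (∃ hh' : h' ∈ Aminus.adjoint.domain, Aminus.adjoint ⟨h', hh'⟩ = 0) →
      f + AFinv k + h = f' + AFinv k' + h' → f = f' ∧ k = k' ∧ h = h') := by
  have hT : Dense (Aplus.domain : Set H) := by rw [hAp]; exact hdense
  refine ⟨fun u hu => ?_, fun f f' k k' h h' hf hf' hk hk' hh hh' heq => ?_⟩
  · obtain ⟨f, hf, k, hk, h, hh, rfl⟩ := LinearPMap.exists_eq_add_add_of_mem_domain hT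
      hproper₁ hproper₂ hinv1 hinv2 hinv3 hu
    exact ⟨f, k, h, hf, LinearPMap.mem_ker.mp hk, LinearPMap.mem_ker.mp hh, rfl⟩
  · rw [← LinearPMap.mem_ker] at hk hk' hh hh'
    obtain ⟨hf0, hk0, hh0⟩ := LinearPMap.eq_zero_of_add_add_eq_zero hT hproper₁ hproper₂
      hinv1 hinv2 hinv3 (sub_mem hf hf') (sub_mem hk hk') (sub_mem hh hh')
      (by rw [map_sub, ← sub_eq_zero.mpr heq]; abel)
    exact ⟨sub_eq_zero.mp hf0, sub_eq_zero.mp hk0, sub_eq_zero.mp hh0⟩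

/-- Let `A± = ±iS + V` with `S`, `V` symmetric on a common dense domain,
`V ≥ ε > 0` and `A±` sectorial, and let `A₊,F` be the Friedrichs extension of `A₊`
(a proper extension of the dual pair with `0 ∈ ρ(A₊,F)`, with bounded inverse `AFinv`). Then
`D(A₋*) = D(closure A₊) ∔ A₊,F⁻¹ ker(A₊*) ∔ ker(A₋*)`, a direct sum decomposition. -/
theorem statement9 {H : Type*} [NormedAddCommGroup H] [InnerProductSpace ℂ H] [CompleteSpace H]
    (Dom : Submodule ℂ H) (hdense : Dense (Dom : Set H))
    (S V : Dom →ₗ[ℂ] H)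
    (hS : ∀ f g : Dom, ⟪S f, (g : H)⟫ = ⟪(f : H), S g⟫)
    (hV : ∀ f g : Dom, ⟪V f, (g : H)⟫ = ⟪(f : H), V g⟫)
    (ε : ℝ) (hε : 0 < ε)
    (hVpos : ∀ ψ : Dom, ε * ‖(ψ : H)‖ ^ 2 ≤ (⟪(ψ : H), V ψ⟫).re)
    (Aplus Aminus : H →ₗ.[ℂ] H)
    (hAp : Aplus = ⟨Dom, Complex.I • S + V⟩)
    (hAm : Aminus = ⟨Dom, (-Complex.I) • S + V⟩)
    (φp φm : ℝ) (hφp : φp ∈ Set.Ioo (0 : ℝ) (2 * π)) (hφm : φm ∈ Set.Ioo (0 : ℝ) (2 * π))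
    (haccp : ∀ ψ : Aplus.domain, 0 ≤ (⟪(ψ : H), Aplus ψ⟫).re)
    (haccm : ∀ ψ : Aminus.domain, 0 ≤ (⟪(ψ : H), Aminus ψ⟫).re)
    (hsecp : ∀ ψ : Aplus.domain, 0 ≤ (Complex.exp (φp * Complex.I) * ⟪(ψ : H), Aplus ψ⟫).re)
    (hsecm : ∀ ψ : Aminus.domain, 0 ≤ (Complex.exp (φm * Complex.I) * ⟪(ψ : H), Aminus ψ⟫).re)
    -- the Friedrichs extension A₊,F, a proper extension of the dual pair with 0 ∈ ρ(A₊,F)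
    (AFp : H →ₗ.[ℂ] H)
    (hproper₁ : Aplus.closure ≤ AFp) (hproper₂ : AFp ≤ Aminus.adjoint)
    (AFinv : H →L[ℂ] H)
    (hinv1 : ∀ x : H, AFinv x ∈ AFp.domain)
    (hinv2 : ∀ x : H, AFp ⟨AFinv x, hinv1 x⟩ = x)
    (hinv3 : ∀ w : AFp.domain, AFinv (AFp w) = (w : H)) :
    -- existence of the decomposition
    (∀ u : H, u ∈ Aminus.adjoint.domain →
      ∃ f k h : H, f ∈ Aplus.closure.domain ∧
        (∃ hk : k ∈ Aplus.adjoint.domain, Aplus.adjoint ⟨k, hk⟩ = 0) ∧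
        (∃ hh : h ∈ Aminus.adjoint.domain, Aminus.adjoint ⟨h, hh⟩ = 0) ∧
        u = f + AFinv k + h) ∧
    -- uniqueness (directness of the sum)
    (∀ f f' k k' h h' : H,
      f ∈ Aplus.closure.domain → f' ∈ Aplus.closure.domain →
      (∃ hk : k ∈ Aplus.adjoint.domain, Aplus.adjoint ⟨k, hk⟩ = 0) →
      (∃ hk' : k' ∈ Aplus.adjoint.domain, Aplus.adjoint ⟨k', hk'⟩ = 0) →
      (∃ hh : h ∈ Aminus.adjoint.domain, Aminus.adjoint ⟨h, hh⟩ = 0) →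
      (∃ hh' : h' ∈ Aminus.adjoint.domain, Aminus.adjoint ⟨h', hh'⟩ = 0) →
      f + AFinv k + h = f' + AFinv k' + h' → f = f' ∧ k = k' ∧ h = h') :=
  statement9_general Dom hdense S V Aplus Aminus hAp AFp hproper₁ hproper₂ AFinv hinv1 hinv2 hinv3
end

section
/- Let V ≥ ε > 0 be closed symmetric with Friedrichs extension V_F and Krein–von Neumann extension V_K, and let 𝔐 ⊆ ker(V*) be a closed subspace with a nonnegative selfadjoint operator B densely defined in 𝔐. Define the form t(f + η) = ‖V_F^{1/2} f‖² + ‖B^{1/2} η‖² on D(V_F^{1/2}) ∔ D(B^{1/2}). Then for two such pairs (𝔐, B) and (𝔐', B'): the associated selfadjoint operators satisfy V_{𝔐,B} ≤ V_{𝔐',B'} in the quadratic form order if and only if B ≤ B' (with the convention that B ≤ B' requires D(B'^{1/2}) ⊆ D(B^{1/2}) and ‖B^{1/2}η‖ ≤ ‖B'^{1/2}η‖). -/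
open scoped ComplexInnerProductSpace

/-- The quadratic-form order on nonnegative selfadjoint operators, expressed through their
square roots: `A ≤ B` iff `D(B^{1/2}) ⊆ D(A^{1/2})` and `‖A^{1/2}f‖ ≤ ‖B^{1/2}f‖` there. -/
def sqrtFormLE {H : Type*} [NormedAddCommGroup H] [InnerProductSpace ℂ H]
    (sqrtA sqrtB : H →ₗ.[ℂ] H) : Prop :=
  sqrtB.domain ≤ sqrtA.domain ∧
    ∀ (f : H) (hfB : f ∈ sqrtB.domain) (hfA : f ∈ sqrtA.domain),
      ‖sqrtA ⟨f, hfA⟩‖ ≤ ‖sqrtB ⟨f, hfB⟩‖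

/-- Let `V ≥ ε > 0` be closed symmetric, `𝔐, 𝔐' ⊆ ker V*` closed subspaces
carrying nonnegative selfadjoint operators `B`, `B'` (given through their square roots
`sB`, `sB'`), and let `V_{𝔐,B}`, `V_{𝔐',B'}` be the associated nonnegative selfadjoint
extensions, whose square roots `sqrtT`, `sqrtT'` satisfy
`D(T^{1/2}) = D(V_F^{1/2}) ∔ D(B^{1/2})` and `‖T^{1/2}(f+η)‖² = ‖V_F^{1/2}f‖² + ‖B^{1/2}η‖²`.
Then `V_{𝔐,B} ≤ V_{𝔐',B'}` in the quadratic form order iff `B ≤ B'`. -/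
theorem statement12 {H : Type*} [NormedAddCommGroup H] [InnerProductSpace ℂ H] [CompleteSpace H]
    (V : H →ₗ.[ℂ] H) (hdense : Dense (V.domain : Set H)) (hclosed : V.IsClosed)
    (hsym : ∀ f g : V.domain, ⟪V f, (g : H)⟫ = ⟪(f : H), V g⟫)
    (ε : ℝ) (hε : 0 < ε)
    (hVpos : ∀ ψ : V.domain, ε * ‖(ψ : H)‖ ^ 2 ≤ (⟪(ψ : H), V ψ⟫).re)
    (kerVstar : Submodule ℂ H)
    (hker : ∀ η : H, η ∈ kerVstar ↔ ∃ hη : η ∈ V.adjoint.domain, V.adjoint ⟨η, hη⟩ = 0)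
    (WF : H →ₗ.[ℂ] H)  -- V_F^{1/2}
    (hdisj : WF.domain ⊓ kerVstar = ⊥)
    -- the auxiliary operators B and B' on subspaces of ker V*, via their square roots
    (sB sB' : H →ₗ.[ℂ] H)
    (hBdom : sB.domain ≤ kerVstar) (hB'dom : sB'.domain ≤ kerVstar)
    -- the square roots of the extensions V_{𝔐,B} and V_{𝔐',B'} (Alonso–Simon form description)
    (sqrtT sqrtT' : H →ₗ.[ℂ] H)
    (hTdom : ∀ u : H, u ∈ sqrtT.domain ↔
      ∃ f ∈ WF.domain, ∃ η ∈ sB.domain, u = f + η)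
    (hT'dom : ∀ u : H, u ∈ sqrtT'.domain ↔
      ∃ f ∈ WF.domain, ∃ η ∈ sB'.domain, u = f + η)
    (hTval : ∀ (f η : H) (hf : f ∈ WF.domain) (hη : η ∈ sB.domain)
      (h : f + η ∈ sqrtT.domain),
      ‖sqrtT ⟨f + η, h⟩‖ ^ 2 = ‖WF ⟨f, hf⟩‖ ^ 2 + ‖sB ⟨η, hη⟩‖ ^ 2)
    (hT'val : ∀ (f η : H) (hf : f ∈ WF.domain) (hη : η ∈ sB'.domain)
      (h : f + η ∈ sqrtT'.domain),
      ‖sqrtT' ⟨f + η, h⟩‖ ^ 2 = ‖WF ⟨f, hf⟩‖ ^ 2 + ‖sB' ⟨η, hη⟩‖ ^ 2) :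
    sqrtFormLE sqrtT sqrtT' ↔ sqrtFormLE sB sB' := by

  have hzero : (0 : H) ∈ WF.domain := WF.domain.zero_mem
  have hWF0 : ‖WF ⟨0, hzero⟩‖ = 0 := by
    have : (⟨0, hzero⟩ : WF.domain) = 0 := rfl
    rw [this]
    simp [LinearPMap.map_zero]
  -- key: for η in both sB.domain and sqrtT.domain, the norms agree
  have keyT : ∀ (η : H) (hA : η ∈ sB.domain) (hT : η ∈ sqrtT.domain),
      ‖sqrtT ⟨η, hT⟩‖ = ‖sB ⟨η, hA⟩‖ := by
    intro η hA hT
    have h' : (0 : H) + η ∈ sqrtT.domain := by rw [zero_add]; exact hT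
    have hv := hTval 0 η hzero hA h'
    have heq : (⟨(0 : H) + η, h'⟩ : sqrtT.domain) = ⟨η, hT⟩ := Subtype.ext (zero_add η)
    rw [heq, hWF0] at hv
    have h1 : ‖sqrtT ⟨η, hT⟩‖ ^ 2 = ‖sB ⟨η, hA⟩‖ ^ 2 := by simpa using hv
    nlinarith [norm_nonneg (sqrtT ⟨η, hT⟩), norm_nonneg (sB ⟨η, hA⟩)]
  have keyT' : ∀ (η : H) (hA : η ∈ sB'.domain) (hT : η ∈ sqrtT'.domain),
      ‖sqrtT' ⟨η, hT⟩‖ = ‖sB' ⟨η, hA⟩‖ := by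
    intro η hA hT
    have h' : (0 : H) + η ∈ sqrtT'.domain := by rw [zero_add]; exact hT
    have hv := hT'val 0 η hzero hA h'
    have heq : (⟨(0 : H) + η, h'⟩ : sqrtT'.domain) = ⟨η, hT⟩ := Subtype.ext (zero_add η)
    rw [heq, hWF0] at hv
    have h1 : ‖sqrtT' ⟨η, hT⟩‖ ^ 2 = ‖sB' ⟨η, hA⟩‖ ^ 2 := by simpa using hv
    nlinarith [norm_nonneg (sqrtT' ⟨η, hT⟩), norm_nonneg (sB' ⟨η, hA⟩)]
  constructor
  · rintro ⟨hdomTT, hle⟩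
    have hdomB : sB'.domain ≤ sB.domain := by
      intro η hη
      have hηT' : η ∈ sqrtT'.domain := by
        rw [hT'dom]; exact ⟨0, hzero, η, hη, (zero_add η).symm⟩
      have hηT : η ∈ sqrtT.domain := hdomTT hηT'
      rw [hTdom] at hηT
      obtain ⟨f, hf, ξ, hξ, huv⟩ := hηT
      have hf0 : f = 0 := by
        have hfk : f ∈ WF.domain ⊓ kerVstar := by
          refine ⟨hf, ?_⟩
          have : f = η - ξ := by rw [huv]; abel
          rw [this]
          exact kerVstar.sub_mem (hB'dom hη) (hBdom hξ)
        rw [hdisj] at hfk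
        exact hfk
      have : η = ξ := by rw [huv, hf0, zero_add]
      rw [this]; exact hξ
    refine ⟨hdomB, ?_⟩
    intro η hη' hη
    have hηT' : η ∈ sqrtT'.domain := by
      rw [hT'dom]; exact ⟨0, hzero, η, hη', (zero_add η).symm⟩
    have hηT : η ∈ sqrtT.domain := hdomTT hηT'
    have := hle η hηT' hηT
    rwa [keyT η hη hηT, keyT' η hη' hηT'] at this
  · rintro ⟨hdomB, hleB⟩
    have hdomT : sqrtT'.domain ≤ sqrtT.domain := by
      intro u hu
      rw [hT'dom] at hu
      obtain ⟨f, hf, η, hη, hu⟩ := hu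
      rw [hTdom]
      exact ⟨f, hf, η, hdomB hη, hu⟩
    refine ⟨hdomT, ?_⟩
    intro u huT' huT
    rw [hT'dom] at huT'
    obtain ⟨f, hf, η, hη, hu⟩ := huT'
    subst hu
    have huT' : f + η ∈ sqrtT'.domain := by
      rw [hT'dom]; exact ⟨f, hf, η, hη, rfl⟩
    have h1 := hTval f η hf (hdomB hη) huT
    have h2 := hT'val f η hf hη huT'
    have h3 := hleB η hη (hdomB hη)
    nlinarith [norm_nonneg (sqrtT ⟨f + η, huT⟩), norm_nonneg (sqrtT' ⟨f + η, huT'⟩),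
      norm_nonneg (sB ⟨η, hdomB hη⟩), norm_nonneg (sB' ⟨η, hη⟩)]
end
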